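/- arXiv:1610.06961 — 2 statements merged into one kernel-verified Lean document; each statement's English description precedes it below -/
import Mathlib

section
/- If A₁ and A₂ are constant positive definite symmetric d×d matrices with A₁ > A₂ (i.e., A₁ − A₂ positive definite), then for every unit vector e and every nonzero ξ with ⟨ξ, e⟩ = 0: ⟨A₁e,e⟩⟨A₁ξ,ξ⟩ − ⟨A₁e,ξ⟩² > ⟨A₂e,e⟩⟨A₂ξ,ξ⟩ − ⟨A₂e,ξ⟩², so the complementing condition characterization holds. -/
noncomputable section

/-- quadratic/bilinear form `⟨A x, y⟩` of a real matrix. -/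
def qf {d : ℕ} (A : Matrix (Fin d) (Fin d) ℝ) (x y : EuclideanSpace ℝ (Fin d)) : ℝ :=
  ∑ i, ∑ j, A i j * x j * y i

lemma qf_symm {d : ℕ} {A : Matrix (Fin d) (Fin d) ℝ} (h : A.IsSymm)
    (x y : EuclideanSpace ℝ (Fin d)) : qf A x y = qf A y x := by
  unfold qf
  rw [Finset.sum_comm]
  refine Finset.sum_congr rfl fun i _ => Finset.sum_congr rfl fun j _ => ?_
  rw [h.apply]; ring

lemma qf_sub {d : ℕ} (A₁ A₂ : Matrix (Fin d) (Fin d) ℝ)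
    (x y : EuclideanSpace ℝ (Fin d)) :
    qf (A₁ - A₂) x y = qf A₁ x y - qf A₂ x y := by
  simp [qf, Matrix.sub_apply, sub_mul, Finset.sum_sub_distrib]

lemma qf_expand {d : ℕ} (A : Matrix (Fin d) (Fin d) ℝ)
    (ξ e : EuclideanSpace ℝ (Fin d)) (c : ℝ) :
    qf A (ξ - c • e) (ξ - c • e) =
      qf A ξ ξ - c * qf A ξ e - c * qf A e ξ + c ^ 2 * qf A e e := by
  have key : ∀ i j, A i j * (ξ - c • e) j * (ξ - c • e) i =
      A i j * ξ j * ξ i - c * (A i j * e j * ξ i) - c * (A i j * ξ j * e i)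
        + c ^ 2 * (A i j * e j * e i) := by
    intro i j
    simp only [PiLp.sub_apply, PiLp.smul_apply, smul_eq_mul]
    ring
  simp only [qf, key, Finset.sum_sub_distrib, Finset.sum_add_distrib, ← Finset.mul_sum]; ring

/-- if `A₁, A₂` are constant positive definite symmetric matrices with
`A₁ − A₂` positive definite, then for every unit vector `e` and nonzero `ξ ⊥ e`,
`⟨A₁e,e⟩⟨A₁ξ,ξ⟩ − ⟨A₁e,ξ⟩² > ⟨A₂e,e⟩⟨A₂ξ,ξ⟩ − ⟨A₂e,ξ⟩²`. -/
theorem stmt11 {d : ℕ} (hd : 2 ≤ d) (A₁ A₂ : Matrix (Fin d) (Fin d) ℝ)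
    (hA₁s : A₁.IsSymm) (hA₂s : A₂.IsSymm)
    (hA₁p : ∀ x : EuclideanSpace ℝ (Fin d), x ≠ 0 → 0 < qf A₁ x x)
    (hA₂p : ∀ x : EuclideanSpace ℝ (Fin d), x ≠ 0 → 0 < qf A₂ x x)
    (hgt : ∀ x : EuclideanSpace ℝ (Fin d), x ≠ 0 → 0 < qf (A₁ - A₂) x x) :
    ∀ e : EuclideanSpace ℝ (Fin d), ‖e‖ = 1 →
      ∀ ξ : EuclideanSpace ℝ (Fin d), inner ℝ ξ e = (0 : ℝ) → ξ ≠ 0 →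
        qf A₂ e e * qf A₂ ξ ξ - (qf A₂ e ξ) ^ 2 <
          qf A₁ e e * qf A₁ ξ ξ - (qf A₁ e ξ) ^ 2 := by
  intro e he ξ hperp hξ
  have he0 : e ≠ 0 := by
    intro h; rw [h, norm_zero] at he; norm_num at he
  have ha₁ : 0 < qf A₁ e e := hA₁p e he0
  have ha₂ : 0 < qf A₂ e e := hA₂p e he0
  set c₁ : ℝ := qf A₁ e ξ / qf A₁ e e with hc₁
  set v : EuclideanSpace ℝ (Fin d) := ξ - c₁ • e with hv
  have hv0 : v ≠ 0 := by
    intro h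
    have hxi : ξ = c₁ • e := by
      have := sub_eq_zero.mp h; exact this
    have : (0 : ℝ) = c₁ := by
      have h1 : inner ℝ ξ e = c₁ * inner ℝ e e := by
        rw [hxi, real_inner_smul_left]
      have h2 : (inner ℝ e e : ℝ) = 1 := by
        rw [real_inner_self_eq_norm_sq, he]; norm_num
      rw [hperp, h2] at h1; linarith [h1]
    exact hξ (by rw [hxi, ← this, zero_smul])
  -- expansions
  have e₁ : qf A₁ v v = qf A₁ ξ ξ - c₁ * qf A₁ ξ e - c₁ * qf A₁ e ξ + c₁ ^ 2 * qf A₁ e e :=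
    qf_expand A₁ ξ e c₁
  have e₂ : qf A₂ v v = qf A₂ ξ ξ - c₁ * qf A₂ ξ e - c₁ * qf A₂ e ξ + c₁ ^ 2 * qf A₂ e e :=
    qf_expand A₂ ξ e c₁
  rw [qf_symm hA₁s ξ e] at e₁
  rw [qf_symm hA₂s ξ e] at e₂
  -- G₁ = a₁ * q₁(v), since c₁ is the exact projection coefficient
  have hG₁ : qf A₁ e e * qf A₁ v v = qf A₁ e e * qf A₁ ξ ξ - (qf A₁ e ξ) ^ 2 := by
    rw [e₁, hc₁]; field_simp; ring
  -- q₂(v) strictly less than q₁(v)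
  have hlt : qf A₂ v v < qf A₁ v v := by
    have := hgt v hv0; rw [qf_sub] at this; linarith
  have haa : qf A₂ e e < qf A₁ e e := by
    have := hgt e he0; rw [qf_sub] at this; linarith
  have hq₁v : 0 < qf A₁ v v := hA₁p v hv0
  -- G₂ ≤ a₂ * q₂(v) : completing the square
  have hG₂ : qf A₂ e e * qf A₂ ξ ξ - (qf A₂ e ξ) ^ 2 ≤ qf A₂ e e * qf A₂ v v := by
    rw [e₂]
    nlinarith [sq_nonneg (c₁ * qf A₂ e e - qf A₂ e ξ), ha₂]
  calc qf A₂ e e * qf A₂ ξ ξ - (qf A₂ e ξ) ^ 2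
      ≤ qf A₂ e e * qf A₂ v v := hG₂
    _ < qf A₁ e e * qf A₁ v v := by nlinarith
    _ = _ := hG₁
end
end

section
/- For u ∈ H¹(ℝ^d_+) one has ‖u‖²_{L²(ℝ^d_0)} ≤ 2 ‖u‖_{L²(ℝ^d_+)} ‖∇u‖_{L²(ℝ^d_+)}, where ℝ^d_0 = {x_d = 0} is the boundary trace hyperplane. -/
open MeasureTheory
noncomputable section

open Set in
lemma key1d (f g : ℝ → ℂ) (hc : ContinuousOn f (Ici 0))
    (hder : ∀ t ∈ Ioi (0:ℝ), HasDerivAt f (g t) t)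
    (hgm : AEStronglyMeasurable g (volume.restrict (Ioi 0)))
    (hf2 : Integrable (fun t => ‖f t‖ ^ 2) (volume.restrict (Ioi 0)))
    (hI : Integrable (fun t => ‖f t‖ * ‖g t‖) (volume.restrict (Ioi 0))) :
    ‖f 0‖ ^ 2 ≤ 2 * ∫ t in Ioi (0:ℝ), ‖f t‖ * ‖g t‖ := by
  set I := ∫ t in Ioi (0:ℝ), ‖f t‖ * ‖g t‖ with hIdef
  -- the derivative of the squared norm
  set D : ℝ → ℝ := fun t => inner ℝ (f t) (g t) + inner ℝ (g t) (f t) with hDdef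
  have hDabs : ∀ t, |D t| ≤ 2 * (‖f t‖ * ‖g t‖) := by
    intro t
    have h1 : |(inner ℝ (f t) (g t) : ℝ)| ≤ ‖f t‖ * ‖g t‖ := abs_real_inner_le_norm _ _
    have h2 : |(inner ℝ (g t) (f t) : ℝ)| ≤ ‖g t‖ * ‖f t‖ := abs_real_inner_le_norm _ _
    calc |D t| ≤ |(inner ℝ (f t) (g t) : ℝ)| + |(inner ℝ (g t) (f t) : ℝ)| := abs_add_le _ _
      _ ≤ 2 * (‖f t‖ * ‖g t‖) := by rw [mul_comm (‖g t‖)] at h2; linarith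
  have hstep : ∀ T : ℝ, 0 < T → ‖f 0‖ ^ 2 ≤ ‖f T‖ ^ 2 + 2 * I := by
    intro T hT
    have hderN : ∀ t ∈ Ioo (0:ℝ) T,
        HasDerivWithinAt (fun t => ‖f t‖ ^ 2) (D t) (Ioi t) t := by
      intro t ht
      have := (hder t ht.1).inner ℝ (hder t ht.1)
      have h2 : HasDerivAt (fun t => ‖f t‖ ^ 2) (D t) t := by
        have e : (fun t => ‖f t‖ ^ 2) = fun t => inner ℝ (f t) (f t) := by
          funext s; rw [real_inner_self_eq_norm_sq]
        rw [e]; exact this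
      exact h2.hasDerivWithinAt
    have hcT : ContinuousOn (fun t => ‖f t‖ ^ 2) (Icc 0 T) := by
      exact ((hc.mono (Icc_subset_Ici_self)).norm.pow 2)
    -- integrability of D on the interval
    have hIsub : Integrable (fun t => 2 * (‖f t‖ * ‖g t‖)) (volume.restrict (Ioc 0 T)) := by
      exact (hI.mono_measure (Measure.restrict_mono Ioc_subset_Ioi_self le_rfl)).const_mul 2
    have hDm : AEStronglyMeasurable D (volume.restrict (Ioc 0 T)) := by
      have hfm : AEStronglyMeasurable f (volume.restrict (Ioc 0 T)) :=
        (hc.mono (fun x hx => hx.1.le)).aestronglyMeasurable measurableSet_Ioc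
      have hgm' : AEStronglyMeasurable g (volume.restrict (Ioc 0 T)) :=
        hgm.mono_measure (Measure.restrict_mono Ioc_subset_Ioi_self le_rfl)
      exact (hfm.inner (𝕜 := ℝ) hgm').add (hgm'.inner (𝕜 := ℝ) hfm)
    have hDint : IntervalIntegrable D volume 0 T := by
      rw [intervalIntegrable_iff_integrableOn_Ioc_of_le hT.le]
      exact Integrable.mono' hIsub hDm (Filter.Eventually.of_forall hDabs)
    have hftc := intervalIntegral.integral_eq_sub_of_hasDeriv_right_of_le hT.le hcT hderN hDint
    have habs : |∫ t in (0:ℝ)..T, D t| ≤ 2 * I := by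
      calc |∫ t in (0:ℝ)..T, D t| ≤ ∫ t in (0:ℝ)..T, |D t| :=
            intervalIntegral.abs_integral_le_integral_abs hT.le
        _ = ∫ t in Ioc (0:ℝ) T, |D t| := intervalIntegral.integral_of_le hT.le
        _ ≤ ∫ t in Ioc (0:ℝ) T, 2 * (‖f t‖ * ‖g t‖) := by
            refine integral_mono_of_nonneg (Filter.Eventually.of_forall fun t => abs_nonneg _)
              hIsub (Filter.Eventually.of_forall hDabs)
        _ ≤ 2 * I := by
            rw [hIdef, ← MeasureTheory.integral_const_mul]
            refine setIntegral_mono_set (hI.const_mul 2) ?_ ?_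
            · exact Filter.Eventually.of_forall fun t => by positivity
            · exact HasSubset.Subset.eventuallyLE Ioc_subset_Ioi_self
    have : ‖f T‖ ^ 2 - ‖f 0‖ ^ 2 = ∫ t in (0:ℝ)..T, D t := hftc.symm
    nlinarith [abs_le.mp habs]
  -- find T with small ‖f T‖²
  have hsmall : ∀ ε : ℝ, 0 < ε → ∃ T : ℝ, 0 < T ∧ ‖f T‖ ^ 2 ≤ ε := by
    intro ε hε
    by_contra h
    push_neg at h
    have hge : Ioi (0:ℝ) ⊆ {t | ε ≤ ‖f t‖ ^ 2} := fun t ht => (h t ht).le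
    have hlt := hf2.measure_ge_lt_top hε
    have : (volume.restrict (Ioi (0:ℝ))) (Ioi 0) ≤
        (volume.restrict (Ioi (0:ℝ))) {t | ε ≤ ‖f t‖ ^ 2} := measure_mono hge
    have h1 : (volume.restrict (Ioi (0:ℝ))) (Ioi 0) = ⊤ := by
      rw [Measure.restrict_apply_self]; simp [Real.volume_Ioi]
    rw [h1, top_le_iff] at this
    rw [this] at hlt
    exact lt_irrefl _ hlt
  refine le_of_forall_pos_le_add fun ε hε => ?_
  obtain ⟨T, hT, hTe⟩ := hsmall ε hε
  calc ‖f 0‖ ^ 2 ≤ ‖f T‖ ^ 2 + 2 * I := hstep T hT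
    _ ≤ 2 * I + ε := by linarith

abbrev Esp (d : ℕ) : Type := EuclideanSpace ℝ (Fin (d - 1))

/-- trace inequality on the half space
`‖u‖²_{L²(ℝ^d_0)} ≤ 2 ‖u‖_{L²(ℝ^d_+)} ‖∇u‖_{L²(ℝ^d_+)}` for `u ∈ H¹(ℝ^d_+)`.
The half space `ℝ^d_+` is modelled as `ℝ^{d−1} × (0,∞)` and the trace on
`ℝ^d_0 = {x_d = 0}` as `x' ↦ u (x', 0)`. -/
theorem stmt13 {d : ℕ} (hd : 2 ≤ d)
    (u : EuclideanSpace ℝ (Fin (d - 1)) × ℝ → ℂ)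
    -- `u ∈ H¹(ℝ^d_+)` (with continuity up to the boundary so that the trace is `u(·,0)`)
    (hc : ContinuousOn u {p | 0 ≤ p.2})
    (hdiff : DifferentiableOn ℝ u {p | 0 < p.2})
    (huL : MemLp u 2 (volume.restrict {p | 0 < p.2}))
    (huG : MemLp (fun p => fderiv ℝ u p) 2 (volume.restrict {p | 0 < p.2})) :
    ∫ x' : EuclideanSpace ℝ (Fin (d - 1)), ‖u (x', 0)‖ ^ 2 ≤
      2 * Real.sqrt (∫ p in {p : EuclideanSpace ℝ (Fin (d - 1)) × ℝ | 0 < p.2}, ‖u p‖ ^ 2) *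
        Real.sqrt (∫ p in {p : EuclideanSpace ℝ (Fin (d - 1)) × ℝ | 0 < p.2},
          ‖fderiv ℝ u p‖ ^ 2) := by
  have hSopen : IsOpen {p : Esp d × ℝ | 0 < p.2} := isOpen_lt continuous_const continuous_snd
  have hSeq : {p : Esp d × ℝ | 0 < p.2} = Set.univ ×ˢ Set.Ioi (0:ℝ) := by
    ext p; simp [Set.mem_prod]
  set ν := volume.restrict (Set.Ioi (0:ℝ)) with hν
  have hμeq : volume.restrict {p : Esp d × ℝ | 0 < p.2} = (volume : Measure (Esp d)).prod ν := by
    rw [hSeq, hν, Measure.volume_eq_prod (Esp d) ℝ, ← Measure.prod_restrict,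
      Measure.restrict_univ]
  rw [hμeq] at huL huG ⊢
  set G : Esp d × ℝ → ℂ := fun p => (fderiv ℝ u p) (0, 1) with hGdef
  have hGmeas : AEStronglyMeasurable G ((volume : Measure (Esp d)).prod ν) :=
    (ContinuousLinearMap.apply ℝ ℂ ((0:Esp d), (1:ℝ))).continuous.comp_aestronglyMeasurable
      huG.aestronglyMeasurable
  have hGnorm : ∀ p, ‖G p‖ ≤ ‖fderiv ℝ u p‖ := by
    intro p
    calc ‖G p‖ ≤ ‖fderiv ℝ u p‖ * ‖((0:Esp d), (1:ℝ))‖ := (fderiv ℝ u p).le_opNorm _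
      _ = ‖fderiv ℝ u p‖ := by rw [Prod.norm_def]; simp
  have hG2 : MemLp G 2 ((volume : Measure (Esp d)).prod ν) :=
    huG.of_le hGmeas (Filter.Eventually.of_forall hGnorm)
  have hprodG : Integrable (fun p => ‖u p‖ * ‖G p‖) ((volume : Measure (Esp d)).prod ν) := by
    rw [← memLp_one_iff_integrable]
    have := hG2.norm.smul (φ := fun p => ‖u p‖) huL.norm
      (p := 2) (q := 2) (r := 1)
    exact this
  have hprodF : Integrable (fun p => ‖u p‖ * ‖fderiv ℝ u p‖) ((volume : Measure (Esp d)).prod ν) := by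
    rw [← memLp_one_iff_integrable]
    have := (huG.norm).smul (φ := fun p => ‖u p‖) huL.norm
      (p := 2) (q := 2) (r := 1)
    exact this
  have hu2int : Integrable (fun p => ‖u p‖ ^ 2) ((volume : Measure (Esp d)).prod ν) :=
    (memLp_two_iff_integrable_sq_norm huL.aestronglyMeasurable).mp huL
  have hsect_prod := hprodG.prod_right_ae
  have hsect_u2 := hu2int.prod_right_ae
  have hsect_Gm := hGmeas.prodMk_left
  have hkey : ∀ᵐ x' ∂(volume : Measure (Esp d)),
      ‖u (x', 0)‖ ^ 2 ≤ 2 * ∫ t, ‖u (x', t)‖ * ‖G (x', t)‖ ∂ν := by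
    filter_upwards [hsect_prod, hsect_u2, hsect_Gm] with x' h1 h2 h3
    refine key1d (fun t => u (x', t)) (fun t => G (x', t)) ?_ ?_ h3 h2 h1
    · exact hc.comp ((Continuous.prodMk_right x').continuousOn) (fun t ht => ht)
    · intro t ht
      have hdAt : DifferentiableAt ℝ u (x', t) :=
        (hdiff (x', t) ht).differentiableAt (hSopen.mem_nhds ht)
      have hline : HasDerivAt (fun t : ℝ => ((x' : Esp d), t)) ((0:Esp d), (1:ℝ)) t :=
        (hasDerivAt_const t x').prodMk (hasDerivAt_id t)
      exact hdAt.hasFDerivAt.comp_hasDerivAt t hline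
  have hrhs_int : Integrable (fun x' => ∫ t, ‖u (x', t)‖ * ‖G (x', t)‖ ∂ν)
      (volume : Measure (Esp d)) := hprodG.integral_prod_left
  have h2conj : (2:ℝ).HolderConjugate 2 := Real.HolderConjugate.two_two
  have hCS : ∫ p, ‖u p‖ * ‖fderiv ℝ u p‖ ∂((volume : Measure (Esp d)).prod ν) ≤
      Real.sqrt (∫ p, ‖u p‖ ^ 2 ∂((volume : Measure (Esp d)).prod ν)) *
      Real.sqrt (∫ p, ‖fderiv ℝ u p‖ ^ 2 ∂((volume : Measure (Esp d)).prod ν)) := by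
    have := integral_mul_le_Lp_mul_Lq_of_nonneg h2conj
      (Filter.Eventually.of_forall fun p => norm_nonneg (u p))
      (Filter.Eventually.of_forall fun p => norm_nonneg (fderiv ℝ u p))
      (by rw [ENNReal.ofReal_ofNat]; exact huL.norm)
      (by rw [ENNReal.ofReal_ofNat]; exact huG.norm)
    simpa [Real.rpow_two, Real.sqrt_eq_rpow] using this
  calc ∫ x' : Esp d, ‖u (x', 0)‖ ^ 2
      ≤ ∫ x', 2 * ∫ t, ‖u (x', t)‖ * ‖G (x', t)‖ ∂ν := by
        refine integral_mono_of_nonneg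
          (Filter.Eventually.of_forall fun x' => by positivity)
          (hrhs_int.const_mul 2) hkey
    _ = 2 * ∫ p, ‖u p‖ * ‖G p‖ ∂((volume : Measure (Esp d)).prod ν) := by
        rw [MeasureTheory.integral_const_mul, integral_prod _ hprodG]
    _ ≤ 2 * ∫ p, ‖u p‖ * ‖fderiv ℝ u p‖ ∂((volume : Measure (Esp d)).prod ν) := by
        have := integral_mono_of_nonneg
          (Filter.Eventually.of_forall fun p => by positivity) hprodF
          (Filter.Eventually.of_forall fun p =>
            mul_le_mul_of_nonneg_left (hGnorm p) (norm_nonneg (u p)))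
        linarith
    _ ≤ 2 * (Real.sqrt (∫ p, ‖u p‖ ^ 2 ∂((volume : Measure (Esp d)).prod ν)) *
        Real.sqrt (∫ p, ‖fderiv ℝ u p‖ ^ 2 ∂((volume : Measure (Esp d)).prod ν))) := by
        linarith
    _ = 2 * Real.sqrt (∫ p, ‖u p‖ ^ 2 ∂((volume : Measure (Esp d)).prod ν)) *
        Real.sqrt (∫ p, ‖fderiv ℝ u p‖ ^ 2 ∂((volume : Measure (Esp d)).prod ν)) := by ring
end
end
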